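/- arXiv:2011.05708 — 2 statements merged into one kernel-verified Lean document; each statement's English description precedes it below -/
import Mathlib

section
/- Fix μ > 0 and W_U > 0. The function λ ↦ −1/W(−exp(−(μ·ln2/(λ·W_U) + 1))) is strictly decreasing on (0, ∞), where W denotes the principal Lambert W branch. Consequently, the optimal uplink spectral efficiency log₂(χ(λ, μ)) with χ(λ, μ) = −1/W(−exp(−(μ·ln2/(λ·W_U) + 1))) decreases with λ. -/
open Real Set

private lemma fmono : StrictMonoOn (fun w : ℝ => w * Real.exp w) (Set.Ici (-1)) := by
  apply strictMonoOn_of_deriv_pos (convex_Ici _)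
  · exact (continuous_id.mul Real.continuous_exp).continuousOn
  · intro w hw
    rw [interior_Ici] at hw
    have hd : HasDerivAt (fun w : ℝ => w * Real.exp w)
        (1 * Real.exp w + w * Real.exp w) w :=
      (hasDerivAt_id w).mul (Real.hasDerivAt_exp w)
    rw [hd.deriv]
    have : 1 * Real.exp w + w * Real.exp w = (1 + w) * Real.exp w := by ring
    rw [this]
    exact mul_pos (by simp only [Set.mem_Ioi] at hw; linarith) (Real.exp_pos w)

/-- For fixed `μ > 0`, `W_U > 0`, the function
`λ ↦ χ(λ) = -1/W(-exp(-(μ ln 2/(λ W_U) + 1)))` is strictly decreasing on `(0,∞)`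
(`W` the principal Lambert W branch), hence the optimal uplink spectral efficiency
`log₂ (χ λ)` also strictly decreases with `λ`. -/
theorem stmt_7 (W : ℝ → ℝ)
    (hW : ∀ z ∈ Set.Ioo (-(Real.exp 1)⁻¹) (0 : ℝ),
      W z * Real.exp (W z) = z ∧ -1 ≤ W z)
    (μ WU : ℝ) (hμ : 0 < μ) (hWU : 0 < WU) :
    let χ : ℝ → ℝ :=
      fun lam => -1 / W (-Real.exp (-(μ * Real.log 2 / (lam * WU) + 1)))
    StrictAntiOn χ (Set.Ioi 0) ∧
    StrictAntiOn (fun lam => Real.logb 2 (χ lam)) (Set.Ioi 0) := by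
  intro χ
  have hc : 0 < μ * Real.log 2 := mul_pos hμ (Real.log_pos one_lt_two)
  set z : ℝ → ℝ := fun lam => -Real.exp (-(μ * Real.log 2 / (lam * WU) + 1)) with hz
  -- membership
  have hmem : ∀ lam : ℝ, 0 < lam → z lam ∈ Set.Ioo (-(Real.exp 1)⁻¹) (0 : ℝ) := by
    intro lam hlam
    have ht : 0 < μ * Real.log 2 / (lam * WU) := div_pos hc (mul_pos hlam hWU)
    constructor
    · have : Real.exp (-(μ * Real.log 2 / (lam * WU) + 1)) < Real.exp (-1) :=
        Real.exp_lt_exp.mpr (by linarith)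
      have h2 : Real.exp (-1) = (Real.exp 1)⁻¹ := Real.exp_neg 1
      simp only [hz]
      linarith
    · simp only [hz, neg_lt_zero]
      positivity
  have hWneg : ∀ lam : ℝ, 0 < lam → W (z lam) < 0 := by
    intro lam hlam
    have h := (hW _ (hmem lam hlam)).1
    by_contra hge
    push_neg at hge
    have hz0 : z lam < 0 := (hmem lam hlam).2
    nlinarith [Real.exp_pos (W (z lam))]
  -- the key comparison
  have key : ∀ a ∈ Set.Ioi (0:ℝ), ∀ b ∈ Set.Ioi (0:ℝ), a < b → χ b < χ a := by
    intro a ha b hb hab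
    simp only [Set.mem_Ioi] at ha hb
    have hta : μ * Real.log 2 / (b * WU) < μ * Real.log 2 / (a * WU) :=
      div_lt_div_of_pos_left hc (mul_pos ha hWU)
        (by exact mul_lt_mul_of_pos_right hab hWU)
    have hzab : z b < z a := by
      simp only [hz, neg_lt_neg_iff]
      exact Real.exp_lt_exp.mpr (by linarith)
    have hWa := hW _ (hmem a ha)
    have hWb := hW _ (hmem b hb)
    have hWab : W (z b) < W (z a) := by
      have := fmono.lt_iff_lt (Set.mem_Ici.mpr hWb.2) (Set.mem_Ici.mpr hWa.2)
      rw [hWb.1, hWa.1] at this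
      exact this.mp hzab
    have hna : 0 < -W (z a) := by linarith [hWneg a ha]
    have h1 : 1 / (-W (z b)) < 1 / (-W (z a)) :=
      one_div_lt_one_div_of_lt hna (by linarith)
    show -1 / W (z b) < -1 / W (z a)
    simpa [div_neg, neg_div] using h1
  have hpos : ∀ lam ∈ Set.Ioi (0:ℝ), 0 < χ lam := by
    intro lam hlam
    simp only [Set.mem_Ioi] at hlam
    have := hWneg lam hlam
    show 0 < -1 / W (z lam)
    rw [neg_div, ← div_neg]
    exact div_pos one_pos (by linarith)
  refine ⟨fun a ha b hb hab => key a ha b hb hab, fun a ha b hb hab => ?_⟩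
  exact Real.logb_lt_logb one_lt_two (hpos b hb) (key a ha b hb hab)
end

section
/- Let g, g' > 0 with g < g', and suppose λ, λ' > 0 satisfy the complementary slackness equations I/τ(λ) = a(g, λ)·W·log₂(1 + c(g)/a(g, λ)) and I/τ(λ') = a(g', λ')·W·log₂(1 + c(g')/a(g', λ')), where τ(λ) = √(λ·I/s) with s > 0, c(g) = p·g/(W·N₀), and a(g, λ) is given by the Lambert-W closed form of Proposition 2 with common μ > 0. If a(g,λ) and τ(λ) are strictly increasing in λ and a is strictly increasing in g, and the left side I/τ strictly decreases in λ, then λ ≥ λ', i.e., λ is non-increasing in g. -/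
/-!
Suppose `λ < λ'`. Since `λ ↦ I/τ(λ)` is strictly decreasing, the rate required of user `g'` is
smaller than that of user `g`. But `a` increases in both arguments, so `a(g, λ) < a(g', λ')`,
and `x ↦ x log (1 + c/x)` is strictly increasing (a perspective of the concave `log`) and
increasing in `c`, so the achieved rate of user `g'` is strictly larger: a contradiction.
-/

open Real

lemma mul_log_one_add_div_lt {c d x y : ℝ} (hc : 0 < c) (hcd : c ≤ d) (hx : 0 < x)
    (hxy : x < y) : x * log (1 + c / x) < y * log (1 + d / y) := by
  have hy : 0 < y := hx.trans hxy
  -- `1 + c/y` is the convex combination of `1 + c/x` and `1` with weights `x/y` and `1 - x/y`.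
  have hconcave : x / y * log (1 + c / x) < log (1 + c / y) := by
    have hmem : 1 + c / x ∈ Set.Ioi (0 : ℝ) := by rw [Set.mem_Ioi]; positivity
    have hne : 1 + c / x ≠ 1 := by simp only [ne_eq, add_eq_left]; positivity
    have h := strictConcaveOn_log_Ioi.2 hmem (Set.mem_Ioi.2 one_pos) hne
      (by positivity : 0 < x / y) (by rw [sub_pos, div_lt_one hy]; exact hxy)
      (add_sub_cancel (x / y) 1)
    have hpoint : x / y * (1 + c / x) + (1 - x / y) * 1 = 1 + c / y := by field_simp; ring
    simpa only [smul_eq_mul, log_one, mul_zero, add_zero, hpoint] using h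
  have hmono : log (1 + c / y) ≤ log (1 + d / y) := by gcongr
  rw [div_mul_eq_mul_div, div_lt_iff₀ hy] at hconcave
  nlinarith

lemma mul_mul_logb_one_add_div_lt {b W c d x y : ℝ} (hb : 1 < b) (hW : 0 < W) (hc : 0 < c)
    (hcd : c ≤ d) (hx : 0 < x) (hxy : x < y) :
    x * W * logb b (1 + c / x) < y * W * logb b (1 + d / y) := by
  have hscale : 0 < W / log b := div_pos hW (log_pos hb)
  calc x * W * logb b (1 + c / x) = W / log b * (x * log (1 + c / x)) := by unfold logb; ring
    _ < W / log b * (y * log (1 + d / y)) :=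
      mul_lt_mul_of_pos_left (mul_log_one_add_div_lt hc hcd hx hxy) hscale
    _ = y * W * logb b (1 + d / y) := by unfold logb; ring

theorem stmt_15_general (I p W N₀ : ℝ) (hp : 0 < p)
    (hW : 0 < W) (hN₀ : 0 < N₀)
    (a : ℝ → ℝ → ℝ)
    (τ : ℝ → ℝ)
    (c : ℝ → ℝ) (hcdef : ∀ g, c g = p * g / (W * N₀))
    (ha_pos : ∀ g lam, 0 < g → 0 < lam → 0 < a g lam)
    (ha_lam : ∀ g, 0 < g → StrictMonoOn (a g) (Set.Ioi 0))
    (ha_g : ∀ lam, 0 < lam → StrictMonoOn (fun g => a g lam) (Set.Ioi 0))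
    (hLHS : StrictAntiOn (fun lam => I / τ lam) (Set.Ioi 0))
    (g g' lam lam' : ℝ) (hg : 0 < g) (hgg' : g < g')
    (hlam : 0 < lam) (hlam' : 0 < lam')
    (heq : I / τ lam = a g lam * W * Real.logb 2 (1 + c g / a g lam))
    (heq' : I / τ lam' = a g' lam' * W * Real.logb 2 (1 + c g' / a g' lam')) :
    lam' ≤ lam := by
  by_contra! hlt
  have hg' : 0 < g' := hg.trans hgg'
  have hc : 0 < c g := by rw [hcdef]; positivity
  have hcc : c g ≤ c g' := by rw [hcdef, hcdef]; gcongr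
  have ha : a g lam < a g' lam' :=
    (ha_lam g hg hlam hlam' hlt).trans (ha_g lam' hlam' hg hg' hgg')
  have hrate := mul_mul_logb_one_add_div_lt one_lt_two hW hc hcc (ha_pos g lam hg hlam) ha
  have hdemand : I / τ lam' < I / τ lam := hLHS hlam hlam' hlt
  rw [heq, heq'] at hdemand
  exact hdemand.not_gt hrate

/-- Corollary 1: in the homogeneous case, with `τ(λ) = √(λ I / s)`,
`c(g) = p g/(W N₀)`, and `a(g, λ)` the closed-form bandwidth (strictly increasing in
`λ` and in `g`, positive), if two offloading users with gains `g < g'` satisfy the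
complementary-slackness rate equations and `λ ↦ I/τ(λ)` strictly decreases, then
`λ' ≤ λ`: the optimal dual variable is non-increasing in the channel gain. -/
theorem stmt_15 (I s p W N₀ : ℝ) (hI : 0 < I) (hs : 0 < s) (hp : 0 < p)
    (hW : 0 < W) (hN₀ : 0 < N₀)
    (a : ℝ → ℝ → ℝ)
    (τ : ℝ → ℝ) (hτ : ∀ lam, τ lam = Real.sqrt (lam * I / s))
    (c : ℝ → ℝ) (hcdef : ∀ g, c g = p * g / (W * N₀))
    (ha_pos : ∀ g lam, 0 < g → 0 < lam → 0 < a g lam)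
    (ha_lam : ∀ g, 0 < g → StrictMonoOn (a g) (Set.Ioi 0))
    (ha_g : ∀ lam, 0 < lam → StrictMonoOn (fun g => a g lam) (Set.Ioi 0))
    (hLHS : StrictAntiOn (fun lam => I / τ lam) (Set.Ioi 0))
    (g g' lam lam' : ℝ) (hg : 0 < g) (hgg' : g < g')
    (hlam : 0 < lam) (hlam' : 0 < lam')
    (heq : I / τ lam = a g lam * W * Real.logb 2 (1 + c g / a g lam))
    (heq' : I / τ lam' = a g' lam' * W * Real.logb 2 (1 + c g' / a g' lam')) :
    lam' ≤ lam :=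
  stmt_15_general I p W N₀ hp hW hN₀ a τ c hcdef ha_pos ha_lam ha_g hLHS g g' lam lam' hg hgg' hlam
    hlam' heq heq'
end
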